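/- arXiv:1503.02792 — 2 statements merged into one kernel-verified Lean document; each statement's English description precedes it below -/
import Mathlib

section
/- Let X be a finite set and b, p, p' partitions of X. Then: (1) p' ⊣_b p if and only if p' is coarser than p and p' ≤_b p; (2) p' ⊐_b p if and only if p' is finer than p and p' ≤_b p. -/
open Sum
open scoped Classical

noncomputable section

namespace PartitionPaper

variable {X : Type*}

/-- The number of blocks of a partition of `X`, encoded as a setoid on `X`. -/
def nc (p : Setoid X) : ℕ := Nat.card (Quotient p)

/-- The geodesic distance `d(p,p') = (nc p + nc p')/2 - nc (p ⊔ p')`. -/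
def pdist (p q : Setoid X) : ℚ :=
  ((nc p : ℚ) + (nc q : ℚ)) / 2 - (nc (p ⊔ q) : ℚ)

/-- Geodesic order with base partition `b` : `p' ≤_b p`. -/
def geoLE (b p' p : Setoid X) : Prop := pdist b p' + pdist p' p = pdist b p

/-- Coarser-compatible order `p' ⊣_b p` : `p'` coarser than `p` and
`nc (p' ⊔ b) = nc (p ⊔ b)`.  (In the setoid lattice, `p ≤ p'` means `p` is finer.) -/
def coarserComp (b p' p : Setoid X) : Prop :=
  p ≤ p' ∧ nc (p' ⊔ b) = nc (p ⊔ b)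

/-- Finer-compatible order `p' ⊐_b p` : `p'` finer than `p` and
`nc p' - nc (p' ⊔ b) = nc p - nc (p ⊔ b)`. -/
def finerComp (b p' p : Setoid X) : Prop :=
  p' ≤ p ∧ (nc p' : ℤ) - (nc (p' ⊔ b) : ℤ) = (nc p : ℤ) - (nc (p ⊔ b) : ℤ)

/-- `p'` is obtained from `p` by gluing two blocks of `p` into one. -/
def IsGluing (p p' : Setoid X) : Prop := p ≤ p' ∧ nc p' + 1 = nc p

/-- The Cayley graph on partitions of `X`: an edge iff one partition is obtained
from the other by gluing two of its blocks into one. -/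
def glueGraph (X : Type*) : SimpleGraph (Setoid X) where
  Adj p q := IsGluing p q ∨ IsGluing q p
  symm := ⟨fun _ _ h => h.elim Or.inr Or.inl⟩
  loopless := ⟨by
    intro p h
    rcases h with ⟨-, h⟩ | ⟨-, h⟩ <;> omega⟩

/-- The segment `[p₁, p₂]` for the geodesic distance. -/
def seg (p₁ p₂ : Setoid X) : Set (Setoid X) :=
  {p | pdist p₁ p + pdist p p₂ = pdist p₁ p₂}

/-- The defect of `p'` from being on `[b, p]`. -/
def df (b p' p : Setoid X) : ℚ := pdist b p' + pdist p' p - pdist b p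

/-- Admissible one-step splits: `p'` is obtained by cutting a (pivotal) block of `p`
into two blocks in such a way that the join with `b` gains one block. -/
def Delta (b p : Setoid X) : Set (Setoid X) :=
  {p' | p' ≤ p ∧ nc p' = nc p + 1 ∧ nc (p' ⊔ b) = nc (p ⊔ b) + 1}

/-- The admissible splits `Sp_b(p) = ⋃ₘ Δ_b^m(p)`. -/
def Sp (b p : Setoid X) : Set (Setoid X) :=
  {p' | Relation.ReflTransGen (fun u v => v ∈ Delta b u) p p'}

/-- The admissible gluings `Gl_b(p)`: partitions obtained by gluing blocks of `p`
without altering the number of blocks of the join with `b`. -/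
def Gl (b p : Setoid X) : Set (Setoid X) :=
  {p' | p ≤ p' ∧ nc (p' ⊔ b) = nc (p ⊔ b)}

/-- `p'` is directly smaller than `p` for the relation `r`. -/
def DirectlySmaller (r : Setoid X → Setoid X → Prop) (p' p : Setoid X) : Prop :=
  r p' p ∧ p' ≠ p ∧ ¬ ∃ p'', p'' ≠ p ∧ p'' ≠ p' ∧ r p' p'' ∧ r p'' p

/-- The block of the partition `p` corresponding to a class `c`. -/
def blockSet (p : Setoid X) (c : Quotient p) : Set X := {x | Quotient.mk p x = c}

/-- The number of blocks of `q` contained in the block `c` of `p`. -/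
def numSubBlocks (q p : Setoid X) (c : Quotient p) : ℕ :=
  Nat.card {d : Quotient q // blockSet q d ⊆ blockSet p c}

/-- The number of blocks of `p` containing exactly `i` blocks of `q`. -/
def rcount (q p : Setoid X) (i : ℕ) : ℕ :=
  Nat.card {c : Quotient p // numSubBlocks q p c = i}

/-- The Möbius function of the refinement order:
`μ_f(q,p) = (-1)^(nc q - nc p) ∏_i ((i-1)!)^(r_i)` for `q` finer than `p`. -/
def muf (q p : Setoid X) : ℤ :=
  (-1) ^ (nc q - nc p) *
    ∏ i ∈ Finset.range (nc q + 1), ((Nat.factorial (i - 1) : ℤ)) ^ (rcount q p i)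

/-- `P_k`: partitions of `{1,…,k} ∪ {1',…,k'}`, the left summand being the
unprimed (top) row and the right summand the primed (bottom) row. -/
abbrev Pk (k : ℕ) := Setoid (Fin k ⊕ Fin k)

/-- The identity partition `id_k = {{i, i'} : 1 ≤ i ≤ k}`. -/
def idk (k : ℕ) : Pk k := Setoid.ker (Sum.elim id id)

/-- The permutation partition associated with `σ`, with blocks `{i, σ(i)'}`. -/
def permPartition {k : ℕ} (σ : Equiv.Perm (Fin k)) : Pk k :=
  Setoid.ker (Sum.elim id σ.symm)

/-- `S_k`, the set of permutation partitions. -/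
def Sk (k : ℕ) : Set (Pk k) := Set.range (permPartition (k := k))

/-- `B_k`, the set of Brauer partitions: all blocks have exactly two elements. -/
def Bk (k : ℕ) : Set (Pk k) := {p | ∀ x, Nat.card {y | p.r x y} = 2}

/-- Embedding of the top/bottom rows of the upper diagram `q` into the
three-row diagram (top ⊕ (middle ⊕ bottom)). -/
def upMap (k : ℕ) : Fin k ⊕ Fin k → Fin k ⊕ (Fin k ⊕ Fin k) :=
  Sum.elim Sum.inl (fun i => Sum.inr (Sum.inl i))

/-- Embedding of the top/bottom rows of the lower diagram `p` into the
three-row diagram. -/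
def downMap (k : ℕ) : Fin k ⊕ Fin k → Fin k ⊕ (Fin k ⊕ Fin k) :=
  Sum.elim (fun i => Sum.inr (Sum.inl i)) (fun i => Sum.inr (Sum.inr i))

/-- The partition of the three-row diagram obtained by stacking a diagram of `q`
on top of a diagram of `p` (identifying the bottom row of `q` with the top row
of `p`): the equivalence relation generated by the copies of `q` and `p`. -/
def stackSetoid {k : ℕ} (p q : Pk k) : Setoid (Fin k ⊕ (Fin k ⊕ Fin k)) :=
  sInf {s | ∀ x y,
    ((∃ a b, upMap k a = x ∧ upMap k b = y ∧ q.r a b) ∨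
     (∃ a b, downMap k a = x ∧ downMap k b = y ∧ p.r a b)) → s.r x y}

/-- The composition `p ∘ q` (a diagram of `q` stacked above a diagram of `p`),
obtained by restricting the stacked partition to the outer rows. -/
def comp {k : ℕ} (p q : Pk k) : Pk k :=
  Setoid.comap (Sum.elim Sum.inl (fun i => Sum.inr (Sum.inr i))) (stackSetoid p q)

/-- `κ(p,q)`: the number of connected components of the stacked diagram entirely
contained in the middle row. -/
def kappaP {k : ℕ} (p q : Pk k) : ℕ :=
  Nat.card {c : Quotient (stackSetoid p q) //
    ∀ x, Quotient.mk (stackSetoid p q) x = c → ∃ i : Fin k, x = Sum.inr (Sum.inl i)}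

/-- The transpose `ᵗp`, exchanging the two rows. -/
def transpose {k : ℕ} (p : Pk k) : Pk k := Setoid.comap Sum.swap p

/-- The disjoint-union partition on a sum type. -/
def sumSetoid {α β : Type*} (p : Setoid α) (q : Setoid β) : Setoid (α ⊕ β) :=
  Setoid.ker (Sum.map (Quotient.mk p) (Quotient.mk q))

/-- Reindexing of the rows for the tensor product. -/
def reindex (k l : ℕ) :
    Fin (k + l) ⊕ Fin (k + l) → (Fin k ⊕ Fin k) ⊕ (Fin l ⊕ Fin l) :=
  Sum.elim
    (fun j => Sum.elim (fun a => Sum.inl (Sum.inl a)) (fun b => Sum.inr (Sum.inl b))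
      (finSumFinEquiv.symm j))
    (fun j => Sum.elim (fun a => Sum.inl (Sum.inr a)) (fun b => Sum.inr (Sum.inr b))
      (finSumFinEquiv.symm j))

/-- The tensor product `p ⊗ q ∈ P_{k+l}`: a diagram of `p` placed to the left of
a diagram of `q`. -/
def tensor {k l : ℕ} (p : Pk k) (q : Pk l) : Pk (k + l) :=
  Setoid.comap (reindex k l) (sumSetoid p q)

/-- The `≺`-defect `η(p,q)`. -/
def eta {k : ℕ} (p q : Pk k) : ℚ :=
  pdist (idk k) p + pdist (idk k) q - pdist (idk k) (comp p q)
    - ((k : ℚ) + (nc (comp p q) : ℚ) - (nc p : ℚ) - (nc q : ℚ)) / 2 - (kappaP p q : ℚ)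

/-- The Kreweras complement of `p'` in `p`: the set of `p''` with `p = p' ∘ p''`
realizing equality in the `≺`-defect inequality. -/
def Krew {k : ℕ} (p p' : Pk k) : Set (Pk k) :=
  {p'' | comp p' p'' = p ∧ eta p' p'' = 0}

/-- `p' ≺ p` : `p'` is an admissible prefix of `p`. -/
def prec {k : ℕ} (p' p : Pk k) : Prop :=
  ∃ p'', comp p' p'' = p ∧ eta p' p'' = 0

/-- The partition of `{1,…,k}` into the orbits (cycles) of the permutation `σ`. -/
def cycleSetoid {k : ℕ} (σ : Equiv.Perm (Fin k)) : Setoid (Fin k) :=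
  ⟨σ.SameCycle,
    ⟨fun x => Equiv.Perm.SameCycle.refl σ x, fun h => h.symm, fun h₁ h₂ => h₁.trans h₂⟩⟩

/-- A partition of `{1,…,k}` is non-crossing if there are no `a < b < c < d` with
`a, c` in one block and `b, d` in a different block. -/
def NonCrossing {k : ℕ} (π : Setoid (Fin k)) : Prop :=
  ¬ ∃ a b c d : Fin k, a < b ∧ b < c ∧ c < d ∧ π.r a c ∧ π.r b d ∧ ¬ π.r a b

/-- The map sending a permutation partition to the partition of `{1,…,k}` into
the orbits of the corresponding bijection (the blocks of `p ⊔ id_k` restricted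
to the top row). -/
def orbitMap {k : ℕ} (p : Pk k) : Setoid (Fin k) :=
  Setoid.comap (Sum.inl : Fin k → Fin k ⊕ Fin k) (p ⊔ idk k)

/-- The permutation `(1,k+1)(2,k+2)⋯(k,2k)` of `{1,…,2k}`. -/
def tauPerm (k : ℕ) : Equiv.Perm (Fin (k + k)) :=
  (finSumFinEquiv.symm.trans (Equiv.sumComm (Fin k) (Fin k))).trans finSumFinEquiv

/-- The left part of a partition in `P_{k₁+k₂}`. -/
def leftPart {k₁ k₂ : ℕ} (p : Pk (k₁ + k₂)) : Pk k₁ :=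
  Setoid.comap (Sum.map (Fin.castAdd k₂) (Fin.castAdd k₂)) p

/-- The right part of a partition in `P_{k₁+k₂}`. -/
def rightPart {k₁ k₂ : ℕ} (p : Pk (k₁ + k₂)) : Pk k₂ :=
  Setoid.comap (Sum.map (Fin.natAdd k₁) (Fin.natAdd k₁)) p

/-- The `p`-moment `m_p(E_N) = Tr_N(E_N ᵗp)/N^{nc(p ⊔ id_k)}
`= ∑_{p'} (E_N)_{p'} N^{nc(p ⊔ p') - nc(p ⊔ id_k)}`. -/
def momentF {k : ℕ} (E : ℕ → Pk k → ℂ) (p : Pk k) (N : ℕ) : ℂ :=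
  ∑ᶠ p' : Pk k, E N p' * (N : ℂ) ^ ((nc (p ⊔ p') : ℤ) - (nc (p ⊔ idk k) : ℤ))

/-- The `p`-cumulant `κ_p(E_N) = N^{nc p - nc (p ⊔ id_k)} (E_N)_p`. -/
def cumulantF {k : ℕ} (E : ℕ → Pk k → ℂ) (p : Pk k) (N : ℕ) : ℂ :=
  (N : ℂ) ^ ((nc p : ℤ) - (nc (p ⊔ idk k) : ℤ)) * E N p

/- When `p` and `p'` are comparable, `p ⊔ p'` is the coarser of the two, so the geodesic
equation `d(b,p') + d(p',p) = d(b,p)` collapses to a linear relation between block counts. -/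

theorem geoLE_iff_nc_sup_eq_of_le {b p p' : Setoid X} (h : p ≤ p') :
    geoLE b p' p ↔ nc (p' ⊔ b) = nc (p ⊔ b) := by
  rw [geoLE, pdist, pdist, pdist, sup_eq_left.mpr h, sup_comm b p', sup_comm b p]
  constructor
  · intro hgeo
    exact_mod_cast (by linarith : (nc (p' ⊔ b) : ℚ) = nc (p ⊔ b))
  · intro hnc
    rw [hnc]
    ring

theorem geoLE_iff_nc_sub_nc_sup_eq_of_le {b p p' : Setoid X} (h : p' ≤ p) :
    geoLE b p' p ↔ (nc p' : ℤ) - nc (p' ⊔ b) = nc p - nc (p ⊔ b) := by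
  rw [geoLE, pdist, pdist, pdist, sup_eq_right.mpr h, sup_comm b p', sup_comm b p]
  constructor
  · intro hgeo
    exact_mod_cast (by linarith : (nc p' : ℚ) - nc (p' ⊔ b) = nc p - nc (p ⊔ b))
  · intro hnc
    have hncℚ : (nc p' : ℚ) - nc (p' ⊔ b) = nc p - nc (p ⊔ b) := by exact_mod_cast hnc
    linarith

theorem statement2_general {X : Type*} (b p p' : Setoid X) :
    (coarserComp b p' p ↔ p ≤ p' ∧ geoLE b p' p) ∧
    (finerComp b p' p ↔ p' ≤ p ∧ geoLE b p' p) :=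
  ⟨and_congr_right fun h => (geoLE_iff_nc_sup_eq_of_le h).symm,
    and_congr_right fun h => (geoLE_iff_nc_sub_nc_sup_eq_of_le h).symm⟩

/-- Characterization of the coarser- and finer-compatible orders:
`p' ⊣_b p` iff `p'` is coarser than `p` and `p' ≤_b p`; `p' ⊐_b p` iff `p'` is finer
than `p` and `p' ≤_b p`. (In the setoid lattice, `p ≤ p'` means `p` is finer than `p'`.) -/
theorem statement2 {X : Type*} [Finite X] (b p p' : Setoid X) :
    (coarserComp b p' p ↔ p ≤ p' ∧ geoLE b p' p) ∧
    (finerComp b p' p ↔ p' ≤ p ∧ geoLE b p' p) :=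
  statement2_general b p p'

end PartitionPaper
end
end

section
/- Let k be a positive integer. For any p ∈ P_k, the set Sp(p) ∩ B_k of admissible splits of p (with base partition id_k) that are Brauer partitions has at most one element. In particular, for any p ∈ B_k, Sp(p) = {p}. -/
open Sum
open scoped Classical

noncomputable section

namespace PartitionPaper

variable {X : Type*}

/-!
Along an admissible split chain, `q ≤ p` and `nc q - nc (q ⊔ b) = nc p - nc (p ⊔ b)`, while
`a ↦ nc a - nc (a ⊔ b)` is antitone (submodularity of the rank of the partition lattice). So if
two pairings (partitions into pairs) `q, q'` lie in `Sp b p`, the partition `q ⊔ q'`, squeezed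
between `q` and `p`, satisfies the same equation.

Write the pairings `q, q', b` as the cycle partitions of fixed-point-free involutions
`α, β, γ`. The blocks of the join of two of them correspond two-to-one to the cycles of the
product, and the genus inequality for `α * γ` and `γ * β`, whose product is `α * β`, becomes
`nc (q ⊔ b) + nc (q' ⊔ b) + nc (q ⊔ q') ≤ nc q + 2 * nc (q ⊔ q' ⊔ b)`.
With the equation for `q ⊔ q'` this forces `nc (q ⊔ q') = nc q`, hence `q = q ⊔ q' = q'`.

If `p` itself is a pairing, cutting one of its pairs leaves `p ⊔ b` unchanged (the block of
the cut point would have odd size), which contradicts the invariant for any `q < p` in `Sp b p`.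
-/

open Equiv Equiv.Perm Function

local notation "cyc" => Equiv.Perm.SameCycle.setoid

section Counting

variable {α β : Type*} [Finite α] [Finite β]

lemma card_le_two_mul_of_fibers (f : α → β)
    (h : ∀ b, ∃ a₁ a₂, ∀ a, f a = b → a = a₁ ∨ a = a₂) :
    Nat.card α ≤ 2 * Nat.card β := by
  have := Fintype.ofFinite α
  have := Fintype.ofFinite β
  simp only [Nat.card_eq_fintype_card, ← Finset.card_univ]
  refine Finset.card_le_mul_card_image_of_maps_to (fun a _ => Finset.mem_univ (f a)) 2
    fun b _ => ?_
  obtain ⟨a₁, a₂, h⟩ := h b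
  calc (Finset.univ.filter fun a => f a = b).card ≤ ({a₁, a₂} : Finset α).card :=
        Finset.card_le_card fun a ha => by simpa using h a (by simpa using ha)
    _ ≤ 2 := Finset.card_le_two

lemma card_eq_two_mul_of_fibers (f : α → β)
    (h : ∀ b, ∃ a₁ a₂, a₁ ≠ a₂ ∧ ∀ a, f a = b ↔ a = a₁ ∨ a = a₂) :
    Nat.card α = 2 * Nat.card β := by
  refine le_antisymm (card_le_two_mul_of_fibers f fun b => ?_) ?_
  · obtain ⟨a₁, a₂, -, h⟩ := h b
    exact ⟨a₁, a₂, fun a => (h a).1⟩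
  have := Fintype.ofFinite α
  have := Fintype.ofFinite β
  simp only [Nat.card_eq_fintype_card, ← Finset.card_univ]
  refine Finset.mul_card_image_le_card_of_maps_to (fun a _ => Finset.mem_univ (f a)) 2
    fun b _ => ?_
  obtain ⟨a₁, a₂, hne, h⟩ := h b
  calc 2 = ({a₁, a₂} : Finset α).card := (Finset.card_pair hne).symm
    _ ≤ (Finset.univ.filter fun a => f a = b).card :=
        Finset.card_le_card fun a ha => by simpa [h a] using ha

end Counting

lemma nc_bot : nc (⊥ : Setoid X) = Nat.card X := Nat.card_congr Setoid.quotientBotEquiv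

lemma map_of_le_surjective {s t : Setoid X} (h : s ≤ t) :
    Surjective (Setoid.map_of_le h) :=
  fun c => c.inductionOn fun x => ⟨Quotient.mk s x, rfl⟩
lemma sameCycle_setoid_le_iff {π : Perm X} {s : Setoid X} :
    cyc π ≤ s ↔ ∀ x, s x (π x) := by
  refine ⟨fun h x => h ⟨1, by simp⟩, fun h => ?_⟩
  suffices hpow : ∀ (n : ℤ) x, s x ((π ^ n) x) by
    rintro x y ⟨n, rfl⟩
    exact hpow n x
  intro n
  induction n using Int.induction_on with
  | zero => exact s.refl'
  | succ n ih => exact fun x => by simpa [zpow_add_one] using s.trans' (h x) (ih (π x))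
  | pred n ih =>
    intro x
    have hx : s x (π⁻¹ x) := s.symm' (by simpa using h (π⁻¹ x))
    simpa [zpow_sub_one] using s.trans' hx (ih (π⁻¹ x))

lemma sameCycle_setoid_swap_le_iff {s : Setoid X} {x y : X} : cyc (swap x y) ≤ s ↔ s x y := by
  refine sameCycle_setoid_le_iff.trans ⟨fun h => by simpa using h x, fun h z => ?_⟩
  rcases eq_or_ne z x with rfl | hzx
  · simpa using h
  rcases eq_or_ne z y with rfl | hzy
  · simpa using s.symm' h
  · rw [swap_apply_of_ne_of_ne hzx hzy]

section Submodularity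

variable [Finite X]

lemma nc_le_nc_of_le {s t : Setoid X} (h : s ≤ t) : nc t ≤ nc s :=
  Nat.card_le_card_of_surjective _ (map_of_le_surjective h)

lemma nc_le_card (s : Setoid X) : nc s ≤ Nat.card X :=
  nc_bot (X := X) ▸ nc_le_nc_of_le bot_le

lemma eq_of_le_of_nc_le {s t : Setoid X} (h : s ≤ t) (hc : nc s ≤ nc t) : s = t := by
  have hinj := ((map_of_le_surjective h).bijective_of_nat_card_le hc).injective
  refine le_antisymm h fun x y hxy => Quotient.exact (hinj (Quotient.sound hxy :
    Setoid.map_of_le h (Quotient.mk s x) = Setoid.map_of_le h (Quotient.mk s y)))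

lemma nc_sup_swap_add_one {s : Setoid X} {x y : X} (h : ¬ s x y) :
    nc (s ⊔ cyc (swap x y)) + 1 = nc s := by
  set t := s ⊔ cyc (swap x y)
  have hst : s ≤ t := le_sup_left
  have htxy : t x y := sameCycle_setoid_swap_le_iff.1 le_sup_right
  let φ : X → Quotient s := fun z => if s z y then Quotient.mk s x else Quotient.mk s z
  have htφ : t ≤ Setoid.ker φ := by
    refine sup_le (fun a b hab => ?_) (sameCycle_setoid_swap_le_iff.2 ?_)
    · simp only [Setoid.ker_def, φ]
      rw [if_congr ⟨fun hay => s.trans' (s.symm' hab) hay, fun hby => s.trans' hab hby⟩ rfl rfl,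
        Quotient.sound hab]
    · simp [Setoid.ker_def, φ]
  let f : {c : Quotient s // c ≠ Quotient.mk s y} → Quotient t :=
    fun c => Setoid.map_of_le hst c.1
  have hf : Bijective f := by
    constructor
    · rintro ⟨a, ha⟩ ⟨b, hb⟩ hab
      induction a using Quotient.inductionOn with | h a => ?_
      induction b using Quotient.inductionOn with | h b => ?_
      have hφ : φ a = φ b := htφ (Quotient.exact hab)
      have hay : ¬ s a y := fun h => ha (Quotient.sound h)
      have hby : ¬ s b y := fun h => hb (Quotient.sound h)
      simp only [φ, if_neg hay, if_neg hby] at hφ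
      exact Subtype.ext hφ
    · intro c
      induction c using Quotient.inductionOn with | h z => ?_
      by_cases hzy : s z y
      · refine ⟨⟨Quotient.mk s x, fun hxy => h (Quotient.exact hxy)⟩, Quotient.sound ?_⟩
        exact t.trans' htxy (hst (s.symm' hzy))
      · exact ⟨⟨Quotient.mk s z, fun h => hzy (Quotient.exact h)⟩, rfl⟩
  rw [nc, nc, ← Nat.card_congr (Equiv.ofBijective f hf),
    ← Nat.card_congr (Equiv.optionSubtypeNe (Quotient.mk s y)), Finite.card_option]

lemma nc_le_nc_sup_swap_add_one (s : Setoid X) (x y : X) :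
    nc s ≤ nc (s ⊔ cyc (swap x y)) + 1 := by
  by_cases h : s x y
  · rw [sup_eq_left.2 (sameCycle_setoid_swap_le_iff.2 h)]
    omega
  · exact (nc_sup_swap_add_one h).ge

theorem nc_add_nc_sup_le_of_le (c : Setoid X) {a b : Setoid X} (hab : a ≤ b) :
    nc b + nc (a ⊔ c) ≤ nc a + nc (b ⊔ c) := by
  induction hn : nc a - nc b generalizing a with
  | zero => rw [eq_of_le_of_nc_le hab (by omega)]
  | succ n ih =>
    obtain ⟨x, y, hbxy, haxy⟩ : ∃ x y, b x y ∧ ¬ a x y := by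
      by_contra! hba
      have := nc_le_nc_of_le hab
      rw [le_antisymm hab fun x y => hba x y] at hn
      omega
    have hpair := nc_sup_swap_add_one haxy
    have hstep := nc_le_nc_sup_swap_add_one (a ⊔ c) x y
    have ih' := ih (sup_le hab (sameCycle_setoid_swap_le_iff.2 hbxy)) (by omega)
    rw [sup_right_comm] at hstep
    omega

end Submodularity

section Genus

lemma sameCycle_setoid_mul_le (σ τ : Perm X) : cyc (σ * τ) ≤ cyc σ ⊔ cyc τ :=
  sameCycle_setoid_le_iff.2 fun x =>
    Setoid.trans' _ (le_sup_right (a := cyc σ) (⟨1, by simp⟩ : τ.SameCycle x (τ x)))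
      (le_sup_left (b := cyc τ) (⟨1, by simp⟩ : σ.SameCycle (τ x) (σ (τ x))))

lemma sameCycle_setoid_one : cyc (1 : Perm X) = ⊥ := by
  ext x y
  exact sameCycle_one

lemma sameCycle_setoid_le_mul_swap_sup (π : Perm X) (u v : X) :
    cyc π ≤ cyc (π * swap u v) ⊔ cyc (swap u v) := by
  simpa [mul_assoc] using sameCycle_setoid_mul_le (π * swap u v) (swap u v)

variable [Finite X]

/-- Following the `π`-cycle of `u` from `π u` until it returns to `u`, the swap is never met,
so `π * swap u v` carries `v` to `u` along the same points. -/
lemma sameCycle_mul_swap_of_not_sameCycle {π : Perm X} {u v : X} (h : ¬ π.SameCycle u v) :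
    (π * swap u v).SameCycle v u := by
  set π' := π * swap u v
  have hstep : ∀ n : ℕ, π'.SameCycle v u ∨ π'.SameCycle v ((π ^ (n + 1)) u) := by
    intro n
    induction n with
    | zero => exact Or.inr ⟨1, by simp [π']⟩
    | succ n ih =>
      rcases ih with hvu | hn
      · exact Or.inl hvu
      set w := (π ^ (n + 1)) u
      by_cases hwu : w = u
      · exact Or.inl (hwu ▸ hn)
      have hwv : w ≠ v := fun hwv => h ⟨(n + 1 : ℕ), by rwa [zpow_natCast]⟩
      have hπ'w : π' w = (π ^ (n + 1 + 1)) u := by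
        simp [π', w, swap_apply_of_ne_of_ne hwu hwv, pow_succ' π (n + 1)]
      exact Or.inr (hπ'w ▸ sameCycle_apply_right.2 hn)
  have hord : (π ^ (orderOf π - 1 + 1)) u = u := by
    rw [Nat.sub_add_cancel (orderOf_pos π), pow_orderOf_eq_one, one_apply]
  exact (hstep (orderOf π - 1)).elim id fun h => hord ▸ h

lemma sameCycle_setoid_mul_swap {π : Perm X} {u v : X} (h : ¬ π.SameCycle u v) :
    cyc (π * swap u v) = cyc π ⊔ cyc (swap u v) := by
  have hpair : cyc (swap u v) ≤ cyc (π * swap u v) :=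
    sameCycle_setoid_swap_le_iff.2 (sameCycle_mul_swap_of_not_sameCycle h).symm
  refine le_antisymm (sameCycle_setoid_mul_le _ _) (sup_le ?_ hpair)
  simpa [sup_eq_left.2 hpair] using sameCycle_setoid_le_mul_swap_sup π u v

lemma nc_sameCycle_setoid_mul_swap_le (π : Perm X) (u v : X) :
    nc (cyc (π * swap u v)) ≤ nc (cyc π) + 1 := by
  have := nc_le_nc_of_le (sameCycle_setoid_le_mul_swap_sup π u v)
  have := nc_le_nc_sup_swap_add_one (cyc (π * swap u v)) u v
  omega

lemma nc_add_nc_add_nc_mul_swap_le {σ τ : Perm X} {x y : X} (hxy : ¬ τ.SameCycle x y)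
    (h : nc (cyc σ) + nc (cyc τ) + nc (cyc (σ * τ))
      ≤ Nat.card X + 2 * nc (cyc σ ⊔ cyc τ)) :
    nc (cyc σ) + nc (cyc (τ * swap x y)) + nc (cyc (σ * (τ * swap x y)))
      ≤ Nat.card X + 2 * nc (cyc σ ⊔ cyc (τ * swap x y)) := by
  have hτ := sameCycle_setoid_mul_swap hxy
  have hncτ := nc_sup_swap_add_one (s := cyc τ) hxy
  rw [← mul_assoc, hτ, ← sup_assoc]
  by_cases hστ : (σ * τ).SameCycle x y
  · rw [sup_eq_left.2 (sameCycle_setoid_swap_le_iff.2 (sameCycle_setoid_mul_le σ τ hστ))]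
    have := nc_sameCycle_setoid_mul_swap_le (σ * τ) x y
    omega
  · rw [sameCycle_setoid_mul_swap hστ]
    have := nc_sup_swap_add_one (s := cyc (σ * τ)) hστ
    have := nc_le_nc_sup_swap_add_one (cyc σ ⊔ cyc τ) x y
    omega

/-- Nonnegativity of the genus of the hypermap whose vertices, edges and faces are the cycles
of `σ`, `τ` and `σ * τ`. Induction on `τ`, splitting off one transposition at a time. -/
theorem nc_add_nc_add_nc_mul_le (σ τ : Perm X) :
    nc (cyc σ) + nc (cyc τ) + nc (cyc (σ * τ)) ≤ Nat.card X + 2 * nc (cyc σ ⊔ cyc τ) := by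
  obtain ⟨m, hm⟩ : ∃ m, Nat.card X - nc (cyc τ) = m := ⟨_, rfl⟩
  induction m using Nat.strong_induction_on generalizing τ with | _ m ih => ?_
  by_cases hτ : ∀ x, τ x = x
  · obtain rfl : τ = 1 := Equiv.ext hτ
    simp only [sameCycle_setoid_one, mul_one, sup_bot_eq, nc_bot]
    omega
  obtain ⟨x, hx⟩ := not_forall.1 hτ
  set τ' := τ * swap x (τ x)
  have hsplit : ¬ τ'.SameCycle x (τ x) := fun h =>
    hx (h.eq_of_right (by simp [τ', IsFixedPt])).symm
  have hτ' : τ' * swap x (τ x) = τ := by simp [τ', mul_assoc]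
  have hnc := nc_sup_swap_add_one (s := cyc τ') hsplit
  rw [← sameCycle_setoid_mul_swap hsplit, hτ'] at hnc
  have hle := nc_le_card (cyc τ')
  rw [← hτ']
  exact nc_add_nc_add_nc_mul_swap_le hsplit (ih _ (by omega) τ' rfl)

end Genus

section Involution

variable {g : Perm X}

lemma inv_eq_self_of_involutive (hg : Involutive g) : g⁻¹ = g :=
  Equiv.ext fun x => by rw [inv_eq_iff_eq, hg]

lemma sameCycle_iff_of_involutive (hg : Involutive g) {x y : X} :
    g.SameCycle x y ↔ y = x ∨ y = g x := by
  refine ⟨fun h => ?_, ?_⟩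
  · have hker : cyc g ≤ Setoid.ker fun z => ({z, g z} : Set X) :=
      sameCycle_setoid_le_iff.2 fun z => by simp [Setoid.ker_def, hg z, Set.pair_comm]
    have hy : y ∈ ({x, g x} : Set X) := (Setoid.ker_def.1 (hker h)).symm ▸ Set.mem_insert y _
    simpa using hy
  · rintro (rfl | rfl)
    · exact SameCycle.refl g y
    · exact ⟨1, by simp⟩

lemma sameCycle_apply_of_conj_eq_inv {σ : Perm X} (h : g * σ * g⁻¹ = σ⁻¹) {u v : X}
    (huv : σ.SameCycle u v) : σ.SameCycle (g u) (g v) := by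
  simpa [h] using huv.conj (g := g)

variable {s : Setoid X}

lemma sup_sameCycle_setoid_iff (hg : Involutive g) (hs : ∀ u v, s u v → s (g u) (g v))
    {x y : X} : (s ⊔ cyc g) x y ↔ s x y ∨ s x (g y) := by
  have hs' : ∀ u v, s u (g v) → s (g u) v := fun u v h => hg v ▸ hs _ _ h
  let r : Setoid X :=
    { r := fun x y => s x y ∨ s x (g y)
      iseqv := by
        refine ⟨fun x => Or.inl (s.refl' x), ?_, ?_⟩
        · rintro x y (h | h)
          · exact Or.inl (s.symm' h)
          · exact Or.inr (s.symm' (hs' _ _ h))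
        · rintro x y z (h | h) (h' | h')
          · exact Or.inl (s.trans' h h')
          · exact Or.inr (s.trans' h h')
          · exact Or.inr (s.trans' h (hs _ _ h'))
          · exact Or.inl (s.trans' h (by simpa [hg z] using hs _ _ h')) }
  refine ⟨fun h => (sup_le (fun x y h => Or.inl h) ?_ : s ⊔ cyc g ≤ r) h, ?_⟩
  · exact sameCycle_setoid_le_iff.2 fun z => Or.inr (by simp [hg z])
  · rintro (h | h)
    · exact le_sup_left (b := cyc g) h
    · exact Setoid.trans' _ (le_sup_left (b := cyc g) h)
        (le_sup_right (a := s) ((sameCycle_iff_of_involutive hg).2 (Or.inr (hg y).symm)))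

lemma map_of_le_sup_eq_iff (hg : Involutive g) (hs : ∀ u v, s u v → s (g u) (g v))
    (a : Quotient s) (x : X) :
    Setoid.map_of_le (le_sup_left (b := cyc g)) a = Quotient.mk _ x ↔
      a = Quotient.mk s x ∨ a = Quotient.mk s (g x) := by
  induction a using Quotient.inductionOn with | h z => ?_
  change Quotient.mk _ z = _ ↔ _
  simp only [Quotient.eq]
  exact sup_sameCycle_setoid_iff hg hs

variable [Finite X]

lemma nc_le_two_mul_nc_sup (hg : Involutive g) (hs : ∀ u v, s u v → s (g u) (g v)) :
    nc s ≤ 2 * nc (s ⊔ cyc g) := by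
  refine card_le_two_mul_of_fibers (Setoid.map_of_le (le_sup_left (b := cyc g))) fun b => ?_
  induction b using Quotient.inductionOn with | h x => ?_
  exact ⟨_, _, fun a => (map_of_le_sup_eq_iff hg hs a x).1⟩

lemma nc_eq_two_mul_nc_sup (hg : Involutive g) (hs : ∀ u v, s u v → s (g u) (g v))
    (hsep : ∀ x, ¬ s x (g x)) : nc s = 2 * nc (s ⊔ cyc g) := by
  refine card_eq_two_mul_of_fibers (Setoid.map_of_le (le_sup_left (b := cyc g))) fun b => ?_
  induction b using Quotient.inductionOn with | h x => ?_
  exact ⟨_, _, fun h => hsep x (Quotient.exact h), fun a => map_of_le_sup_eq_iff hg hs a x⟩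

lemma card_eq_two_mul_nc_of_involutive (hg : Involutive g) (hfix : ∀ x, g x ≠ x) :
    Nat.card X = 2 * nc (cyc g) := by
  simpa [nc_bot] using nc_eq_two_mul_nc_sup (s := ⊥) hg (fun u v h => congrArg g h)
    fun x h => hfix x h.symm

end Involution

section Loops

variable {α β γ : Perm X}

lemma conj_mul_eq_inv_right (hα : Involutive α) (hβ : Involutive β) :
    β * (α * β) * β⁻¹ = (α * β)⁻¹ := by
  rw [mul_inv_rev, inv_eq_self_of_involutive hα, inv_eq_self_of_involutive hβ]
  ext x
  simp [hβ x]

lemma conj_mul_eq_inv_left (hα : Involutive α) (hβ : Involutive β) :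
    α * (α * β) * α⁻¹ = (α * β)⁻¹ := by
  rw [mul_inv_rev, inv_eq_self_of_involutive hα, inv_eq_self_of_involutive hβ]
  ext x
  simp [hα (β (α x))]

lemma mul_mul_cancel_right_of_involutive (α : Perm X) (hβ : Involutive β) :
    α * β * β = α := by
  ext x
  simp [hβ x]

lemma mul_mul_cancel_left_of_involutive (hα : Involutive α) (β : Perm X) :
    α * (α * β) = β := by
  ext x
  simp [hα (β x)]

/-- Along a cycle of `α * β` the points alternate between the two matchings, so a point
and its `β`-partner on one cycle would force a fixed point of `α` or `β`. -/
lemma not_sameCycle_mul_apply_right (hα : Involutive α) (hβ : Involutive β)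
    (hαfix : ∀ x, α x ≠ x) (hβfix : ∀ x, β x ≠ x) (x : X) :
    ¬ (α * β).SameCycle x (β x) := by
  set σ := α * β
  have hrev : ∀ (n : ℤ) z, β ((σ ^ n) z) = (σ ^ (-n)) (β z) := by
    intro n z
    have h := conj_zpow (a := β) (b := σ) (i := n)
    rw [conj_mul_eq_inv_right hα hβ, inv_zpow', inv_eq_self_of_involutive hβ] at h
    simpa [σ, hβ z] using congrArg (· (β z)) h.symm
  rintro ⟨n, hn⟩
  obtain ⟨m, rfl | rfl⟩ := Int.even_or_odd' n
  · apply hβfix ((σ ^ m) x)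
    rw [hrev, ← hn, ← mul_apply, ← zpow_add]
    congr 2
    ring
  · apply hαfix ((σ ^ (m + 1)) x)
    have hασ : α ((σ ^ (m + 1)) x) = σ (β ((σ ^ (m + 1)) x)) := by simp [σ, hβ _]
    rw [hασ, hrev, ← hn]
    simp only [← mul_apply, ← zpow_one_add, ← zpow_add]
    congr 2
    ring

variable [Finite X]

/-- Each block of `cyc α ⊔ cyc β` is a loop alternating between the two matchings, and it
carries exactly two cycles of `α * β`, one for each direction of travel. -/
theorem nc_sameCycle_setoid_mul (hα : Involutive α) (hβ : Involutive β)
    (hαfix : ∀ x, α x ≠ x) (hβfix : ∀ x, β x ≠ x) :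
    nc (cyc (α * β)) = 2 * nc (cyc α ⊔ cyc β) := by
  have hsup : cyc (α * β) ⊔ cyc β = cyc α ⊔ cyc β := by
    refine le_antisymm (sup_le (sameCycle_setoid_mul_le α β) le_sup_right)
      (sup_le ?_ le_sup_right)
    simpa [mul_mul_cancel_right_of_involutive α hβ] using sameCycle_setoid_mul_le (α * β) β
  rw [← hsup]
  exact nc_eq_two_mul_nc_sup hβ
    (fun _ _ => sameCycle_apply_of_conj_eq_inv (conj_mul_eq_inv_right hα hβ))
    (not_sameCycle_mul_apply_right hα hβ hαfix hβfix)

theorem nc_sup_le_two_mul_nc_sup (hα : Involutive α) (hβ : Involutive β) (hγ : Involutive γ) :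
    nc (cyc (α * γ) ⊔ cyc (γ * β)) ≤ 2 * nc (cyc α ⊔ cyc β ⊔ cyc γ) := by
  set s := cyc (α * γ) ⊔ cyc (γ * β)
  have hs : s ≤ s.comap γ := sup_le
    (fun _ _ h => le_sup_left (b := cyc (γ * β))
      (sameCycle_apply_of_conj_eq_inv (conj_mul_eq_inv_right hα hγ) h))
    (fun _ _ h => le_sup_right (a := cyc (α * γ))
      (sameCycle_apply_of_conj_eq_inv (conj_mul_eq_inv_left hγ hβ) h))
  have hsup : s ⊔ cyc γ = cyc α ⊔ cyc β ⊔ cyc γ := by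
    refine le_antisymm (sup_le (sup_le ?_ ?_) le_sup_right) (sup_le (sup_le ?_ ?_) le_sup_right)
    · exact (sameCycle_setoid_mul_le α γ).trans (sup_le_sup_right le_sup_left _)
    · exact (sameCycle_setoid_mul_le γ β).trans
        (sup_le le_sup_right (le_sup_right.trans le_sup_left))
    · have := sameCycle_setoid_mul_le (α * γ) γ
      rw [mul_mul_cancel_right_of_involutive α hγ] at this
      exact this.trans (sup_le_sup_right le_sup_left _)
    · have := sameCycle_setoid_mul_le γ (γ * β)
      rw [mul_mul_cancel_left_of_involutive hγ β] at this
      exact this.trans (sup_le le_sup_right (le_sup_right.trans le_sup_left))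
  rw [← hsup]
  exact nc_le_two_mul_nc_sup hγ fun _ _ h => hs h

/-- The Euler characteristic bound for three perfect matchings: the faces of the associated
map (the loops of each pair of matchings) number at most `V / 2 + 2` per connected component. -/
theorem nc_sup_add_nc_sup_add_nc_sup_le (hα : Involutive α) (hβ : Involutive β)
    (hγ : Involutive γ) (hαfix : ∀ x, α x ≠ x) (hβfix : ∀ x, β x ≠ x)
    (hγfix : ∀ x, γ x ≠ x) :
    nc (cyc α ⊔ cyc γ) + nc (cyc β ⊔ cyc γ) + nc (cyc α ⊔ cyc β)
      ≤ nc (cyc α) + 2 * nc (cyc α ⊔ cyc β ⊔ cyc γ) := by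
  have hgenus := nc_add_nc_add_nc_mul_le (α * γ) (γ * β)
  rw [show α * γ * (γ * β) = α * β by
      rw [← mul_assoc, mul_mul_cancel_right_of_involutive α hγ],
    nc_sameCycle_setoid_mul hα hγ hαfix hγfix, nc_sameCycle_setoid_mul hγ hβ hγfix hβfix,
    nc_sameCycle_setoid_mul hα hβ hαfix hβfix, sup_comm (cyc γ)] at hgenus
  have := nc_sup_le_two_mul_nc_sup hα hβ hγ
  have := card_eq_two_mul_nc_of_involutive hα hαfix
  omega

end Loops

section Pairing

def IsPairing (p : Setoid X) : Prop := ∀ x, Nat.card {y | p x y} = 2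

lemma isPairing_sameCycle_setoid {g : Perm X} (hg : Involutive g) (hfix : ∀ x, g x ≠ x) :
    IsPairing (cyc g) := by
  intro x
  have hclass : {y | cyc g x y} = {x, g x} := by
    ext y
    exact sameCycle_iff_of_involutive hg
  rw [hclass, Nat.card_coe_set_eq, Set.ncard_pair (hfix x).symm]

lemma IsPairing.exists_perm {p : Setoid X} (hp : IsPairing p) :
    ∃ α : Perm X, Involutive α ∧ (∀ x, α x ≠ x) ∧ cyc α = p := by
  have hpartner : ∀ x, ∃ y, y ≠ x ∧ ∀ z, p x z ↔ z = x ∨ z = y := by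
    intro x
    obtain ⟨⟨y, hxy⟩, hyx, hy⟩ := (Nat.card_eq_two_iff' ⟨x, p.refl' x⟩).1 (hp x)
    refine ⟨y, fun h => hyx (Subtype.ext h), fun z => ⟨fun hz => ?_, ?_⟩⟩
    · by_cases hzx : z = x
      · exact Or.inl hzx
      · exact Or.inr (congrArg Subtype.val (hy ⟨z, hz⟩ fun h => hzx (congrArg Subtype.val h)))
    · rintro (rfl | rfl)
      exacts [p.refl' z, hxy]
  choose f hfx hf using hpartner
  have hinv : Involutive f := fun x =>
    ((hf (f x) x).1 (p.symm' ((hf x (f x)).2 (Or.inr rfl)))).elim (fun h => absurd h.symm (hfx x))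
      Eq.symm
  refine ⟨hinv.toPerm f, hinv, hfx, ?_⟩
  ext x y
  exact (sameCycle_iff_of_involutive (Function.Involutive.toPerm_involutive hinv)).trans
    (hf x y).symm

end Pairing

section Split

variable {α γ : Perm X}

lemma not_sameCycle_mul_swap_apply (hα : Involutive α) (hαfix : ∀ x, α x ≠ x) (x : X) :
    ¬ (α * swap x (α x)).SameCycle x (α x) := fun h =>
  hαfix x (h.eq_of_left (by simp [IsFixedPt, hα x])).symm

lemma le_sameCycle_setoid_mul_swap (hα : Involutive α) {q : Setoid X} (hq : q ≤ cyc α)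
    {x : X} (hx : ¬ q x (α x)) : q ≤ cyc (α * swap x (α x)) := by
  intro z w hzw
  rcases (sameCycle_iff_of_involutive hα).1 (hq hzw) with rfl | rfl
  · exact SameCycle.refl _ _
  have hzx : z ≠ x := by
    rintro rfl
    exact hx hzw
  have hzαx : z ≠ α x := by
    rintro rfl
    exact hx (q.symm' (by rwa [hα x] at hzw))
  exact ⟨1, by simp [swap_apply_of_ne_of_ne hzx hzαx]⟩

variable [Finite X]

lemma even_ncard_of_involutive {f : X → X} (hf : Involutive f) {S : Set X}
    (hS : ∀ x ∈ S, f x ∈ S) (hfix : ∀ x ∈ S, f x ≠ x) : Even S.ncard := by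
  let g : S → S := fun x => ⟨f x, hS x x.2⟩
  have hg : Involutive g := fun x => Subtype.ext (hf x)
  rw [← Nat.card_coe_set_eq, card_eq_two_mul_nc_of_involutive (Involutive.toPerm_involutive hg)
    fun x h => hfix x x.2 (congrArg Subtype.val h)]
  exact even_two_mul _

/-- Cutting a pair `{x, α x}` of a perfect matching never disconnects its join with a second
perfect matching `γ`: the block of `x` would then have odd size, being `γ`-stable and, after
removing `x`, `α`-stable. -/
lemma sup_sameCycle_setoid_mul_swap_eq (hα : Involutive α) (hαfix : ∀ x, α x ≠ x)
    (hγ : Involutive γ) (hγfix : ∀ x, γ x ≠ x) (x : X) :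
    cyc (α * swap x (α x)) ⊔ cyc γ = cyc α ⊔ cyc γ := by
  set π := α * swap x (α x)
  set r := cyc π ⊔ cyc γ
  have hsplit := sameCycle_setoid_mul_swap (not_sameCycle_mul_swap_apply hα hαfix x)
  rw [mul_swap_mul_self] at hsplit
  have hxαx : r x (α x) := by
    by_contra hxαx
    have hγS : Even {z | r x z}.ncard := by
      refine even_ncard_of_involutive hγ (fun z hz => r.trans' hz ?_) fun z _ => hγfix z
      exact le_sup_right (a := cyc π) (⟨1, by simp⟩ : γ.SameCycle z (γ z))
    have hαS : Even ({z | r x z} \ {x}).ncard := by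
      refine even_ncard_of_involutive hα (fun z ⟨hz, hzx⟩ => ?_) fun z _ => hαfix z
      have hzαx : z ≠ α x := fun h => hxαx (h ▸ hz)
      have hπz : π.SameCycle z (α z) := ⟨1, by simp [π, swap_apply_of_ne_of_ne hzx hzαx]⟩
      refine ⟨r.trans' hz (le_sup_left (b := cyc γ) hπz), fun h => hzαx ?_⟩
      rw [← h, hα z]
    rw [Set.ncard_sdiff_singleton_of_mem (r.refl' x)] at hαS
    have hpos : 0 < {z | r x z}.ncard := (Set.ncard_pos (Set.toFinite _)).2 ⟨x, r.refl' x⟩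
    obtain ⟨a, ha⟩ := hγS
    obtain ⟨b, hb⟩ := hαS
    omega
  refine le_antisymm (sup_le_sup_right ?_ _) (sup_le ?_ le_sup_right)
  · rw [hsplit]
    exact le_sup_left
  · rw [hsplit]
    exact sup_le le_sup_left (sameCycle_setoid_swap_le_iff.2 hxαx)

end Split

lemma le_and_nc_add_nc_sup_eq_of_mem_Sp {b p q : Setoid X} (h : q ∈ Sp b p) :
    q ≤ p ∧ nc q + nc (p ⊔ b) = nc p + nc (q ⊔ b) := by
  induction h with
  | refl => exact ⟨le_rfl, rfl⟩
  | tail _ hstep ih =>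
    obtain ⟨hle, hnc, hnc_sup⟩ := hstep
    exact ⟨hle.trans ih.1, by omega⟩

section Sp

variable [Finite X] {b p : Setoid X}

theorem eq_of_mem_Sp_of_isPairing (hb : IsPairing b) {q q' : Setoid X} (hq : q ∈ Sp b p)
    (hq' : q' ∈ Sp b p) (hqP : IsPairing q) (hq'P : IsPairing q') : q = q' := by
  obtain ⟨hqp, hnc⟩ := le_and_nc_add_nc_sup_eq_of_mem_Sp hq
  obtain ⟨hq'p, hnc'⟩ := le_and_nc_add_nc_sup_eq_of_mem_Sp hq'
  obtain ⟨α, hα, hαfix, rfl⟩ := hqP.exists_perm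
  obtain ⟨β, hβ, hβfix, rfl⟩ := hq'P.exists_perm
  obtain ⟨γ, hγ, hγfix, rfl⟩ := hb.exists_perm
  have heuler := nc_sup_add_nc_sup_add_nc_sup_le hα hβ hγ hαfix hβfix hγfix
  have hcardα := card_eq_two_mul_nc_of_involutive hα hαfix
  have hcardβ := card_eq_two_mul_nc_of_involutive hβ hβfix
  have hmono := nc_add_nc_sup_le_of_le (cyc γ) (sup_le hqp hq'p)
  have hα_le := nc_le_nc_of_le (le_sup_left : cyc α ≤ cyc α ⊔ cyc β)
  have hβ_le := nc_le_nc_of_le (le_sup_right : cyc β ≤ cyc α ⊔ cyc β)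
  exact (eq_of_le_of_nc_le le_sup_left (by omega)).trans
    (eq_of_le_of_nc_le le_sup_right (by omega)).symm

theorem Sp_eq_singleton_of_isPairing (hb : IsPairing b) (hp : IsPairing p) : Sp b p = {p} := by
  refine Set.eq_singleton_iff_unique_mem.2 ⟨Relation.ReflTransGen.refl, fun q hq => ?_⟩
  obtain ⟨hqp, hnc⟩ := le_and_nc_add_nc_sup_eq_of_mem_Sp hq
  obtain ⟨α, hα, hαfix, rfl⟩ := hp.exists_perm
  obtain ⟨γ, hγ, hγfix, rfl⟩ := hb.exists_perm
  by_contra hne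
  obtain ⟨x, hx⟩ : ∃ x, ¬ q x (α x) := by
    by_contra! hq
    refine hne (le_antisymm hqp fun z w hzw => ?_)
    rcases (sameCycle_iff_of_involutive hα).1 hzw with rfl | rfl
    exacts [q.refl' _, hq z]
  have hsplit := not_sameCycle_mul_swap_apply hα hαfix x
  have hnc_split := nc_sup_swap_add_one (s := cyc (α * swap x (α x))) hsplit
  rw [← sameCycle_setoid_mul_swap hsplit, mul_swap_mul_self] at hnc_split
  have hmono := nc_add_nc_sup_le_of_le (cyc γ) (le_sameCycle_setoid_mul_swap hα hqp hx)
  rw [sup_sameCycle_setoid_mul_swap_eq hα hαfix hγ hγfix x] at hmono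
  omega

end Sp

lemma isPairing_idk (k : ℕ) : IsPairing (idk k) := by
  have hinv : Involutive (Equiv.sumComm (Fin k) (Fin k)) := fun x => by cases x <;> rfl
  have hidk : idk k = cyc (Equiv.sumComm (Fin k) (Fin k)) := by
    ext x y
    change Sum.elim id id x = Sum.elim id id y ↔ SameCycle _ x y
    rw [sameCycle_iff_of_involutive hinv]
    rcases x with i | i <;> rcases y with j | j <;> simp [eq_comm]
  rw [hidk]
  exact isPairing_sameCycle_setoid hinv fun x => by cases x <;> simp

theorem statement11_general (k : ℕ) :
    (∀ p : Pk k, (Sp (idk k) p ∩ Bk k).Subsingleton) ∧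
    (∀ p ∈ Bk k, Sp (idk k) p = {p}) :=
  ⟨fun _ _ hq _ hq' => eq_of_mem_Sp_of_isPairing (isPairing_idk k) hq.1 hq'.1 hq.2 hq'.2,
    fun _ hp => Sp_eq_singleton_of_isPairing (isPairing_idk k) hp⟩

/-- For any `p ∈ P_k`, the set `Sp(p) ∩ B_k` of admissible splits of
`p` (base `id_k`) that are Brauer partitions has at most one element; in particular
`Sp(p) = {p}` for any Brauer partition `p`. -/
theorem statement11 (k : ℕ) (hk : 0 < k) :
    (∀ p : Pk k, (Sp (idk k) p ∩ Bk k).Subsingleton) ∧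
    (∀ p ∈ Bk k, Sp (idk k) p = {p}) :=
  statement11_general k

end PartitionPaper
end
end
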